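/- Let μ ∈ ℂ with Re μ > 0, let λ lie in the closed unit disk, and let z₀ ∈ D. If |λ| = 1 or z₀ = 0, then V(z₀, λ) is the singleton {(μ/π)·log((1 − z₀)/(1 − λ z₀))}, where log denotes the principal branch. -/

import Mathlib

open Complex Set Metric

noncomputable section

/-- The open unit disk in `ℂ`. -/
def unitDisk : Set ℂ := Metric.ball (0 : ℂ) 1

/-- `P_f(z) = (2π/μ)·(z f'(z)/f(z)) + (1+z)/(1−z)`. -/
def Pfun (μ : ℂ) (f : ℂ → ℂ) (z : ℂ) : ℂ :=
  2 * (Real.pi : ℂ) / μ * (z * deriv f z / f z) + (1 + z) / (1 - z)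

/-- Membership in the class `F_μ`: analytic, non-vanishing on the disk, `f(0) = 1`,
and `Re P_f > 0` on the disk. -/
def memF (μ : ℂ) (f : ℂ → ℂ) : Prop :=
  AnalyticOnNhd ℂ f unitDisk ∧ (∀ z ∈ unitDisk, f z ≠ 0) ∧ f 0 = 1 ∧
    ∀ z ∈ unitDisk, 0 < (Pfun μ f z).re

/-- Membership in the class `F_μ(λ)`: `f ∈ F_μ` with `f'(0) = (μ/π)(λ − 1)`. -/
def memFlam (μ lam : ℂ) (f : ℂ → ℂ) : Prop :=
  memF μ f ∧ deriv f 0 = μ / (Real.pi : ℂ) * (lam - 1)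

/-- The branch of `log f` vanishing at `0`: `log f(z) = ∫₀^z f'(ζ)/f(ζ) dζ`
(integral over the segment from `0` to `z`). -/
def logf (f : ℂ → ℂ) (z : ℂ) : ℂ :=
  ∫ t in (0:ℝ)..1, deriv f (t * z) / f (t * z) * z

/-- The region of variability `V(z₀, λ) = {log f(z₀) : f ∈ F_μ(λ)}`. -/
def Vset (μ lam z₀ : ℂ) : Set ℂ := {w | ∃ f, memFlam μ lam f ∧ w = logf f z₀}

/-- `δ(w, λ) = (w + λ)/(1 + conj(λ) w)`. -/
def dl (lam w : ℂ) : ℂ := (w + lam) / (1 + (starRingEnd ℂ) lam * w)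

/-- `log H_{a,λ}(z) = (μ/π)·∫₀^z (δ(aζ,λ) − 1)/((1 − δ(aζ,λ)ζ)(1 − ζ)) dζ`
(integral over the segment from `0` to `z`). -/
def Hlog (μ lam a z : ℂ) : ℂ :=
  μ / (Real.pi : ℂ) *
    ∫ t in (0:ℝ)..1,
      (dl lam (a * (t * z)) - 1) /
        ((1 - dl lam (a * (t * z)) * (t * z)) * (1 - t * z)) * z

/-- The function `H_{a,λ}(z) = exp(log H_{a,λ}(z))`. -/
def Hfun (μ lam a z : ℂ) : ℂ := Complex.exp (Hlog μ lam a z)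

/-- `c(z, λ)`. -/
def cfun (z lam : ℂ) : ℂ :=
  ((‖z‖ : ℂ) ^ 2 * ((starRingEnd ℂ) z - lam) * (1 - (starRingEnd ℂ) lam)
      - (1 - lam) * (1 - (starRingEnd ℂ) lam * (starRingEnd ℂ) z)) /
    ((1 - z) * (1 - (‖z‖ : ℂ) ^ 2)
      * (1 + (‖z‖ : ℂ) ^ 2 - 2 * ((lam * z).re : ℂ)))

/-- `r(z, λ)`. -/
def rfun (z lam : ℂ) : ℝ :=
  (1 - ‖lam‖ ^ 2) * ‖z‖ /
    ((1 - ‖z‖ ^ 2) * (1 + ‖z‖ ^ 2 - 2 * (lam * z).re))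

/-- A starlike univalent function on the unit disk: analytic, `φ(0) = 0`, `φ'(0) = 1`,
univalent, and `Re(z φ'(z)/φ(z)) > 0` on the disk. -/
def IsStarlike (φ : ℂ → ℂ) : Prop :=
  AnalyticOnNhd ℂ φ unitDisk ∧ φ 0 = 0 ∧ deriv φ 0 = 1 ∧
    Set.InjOn φ unitDisk ∧
    ∀ z ∈ unitDisk, z ≠ 0 → 0 < (z * deriv φ z / φ z).re

/-- `G(z) = (μ/π)·∫₀^z e^{iθ}ζ/(1 + (conj(λ)e^{iθ} − λ)ζ − e^{iθ}ζ²)² dζ`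
(integral over the segment from `0` to `z`). -/
def Gfun (μ lam : ℂ) (θ : ℝ) (z : ℂ) : ℂ :=
  μ / (Real.pi : ℂ) *
    ∫ t in (0:ℝ)..1,
      Complex.exp (θ * Complex.I) * (t * z) /
        (1 + ((starRingEnd ℂ) lam * Complex.exp (θ * Complex.I) - lam) * (t * z)
          - Complex.exp (θ * Complex.I) * (t * z) ^ 2) ^ 2 * z

end

/-!
The extremal function `f₀ = ((1 - z) / (1 - λ z)) ^ (μ / π)` has `P_{f₀}(z) = (1 + λ z) / (1 - λ z)`,
so it lies in `F_μ(λ)` and `log f₀(z₀)` is the asserted value. Conversely, for `f ∈ F_μ(λ)` the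
function `ω = (P_f - 1) / (P_f + 1)` maps the disk into itself with `ω(0) = 0` and `ω'(0) = λ`.
If `|λ| = 1`, the equality case of Schwarz's lemma forces `ω(z) = λ z`, i.e. `P_f = P_{f₀}`, hence
`f'/f = f₀'/f₀` and `log f = log f₀`. If `z₀ = 0`, both sides vanish.
-/

namespace Complex

lemma re_one_sub_pos {w : ℂ} (hw : ‖w‖ < 1) : 0 < (1 - w).re := by
  have := re_le_norm w
  simp only [sub_re, one_re]
  linarith

lemma one_sub_ne_zero_of_norm_lt_one {w : ℂ} (hw : ‖w‖ < 1) : 1 - w ≠ 0 := fun h => by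
  simpa [h] using re_one_sub_pos hw

lemma re_one_add_div_one_sub_pos {w : ℂ} (hw : ‖w‖ < 1) : 0 < ((1 + w) / (1 - w)).re := by
  have hsq : w.re * w.re + w.im * w.im < 1 := by
    rw [← normSq_apply, ← Complex.sq_norm]
    nlinarith [norm_nonneg w]
  rw [div_re, ← add_div]
  refine div_pos ?_ (normSq_pos.2 (one_sub_ne_zero_of_norm_lt_one hw))
  simp only [add_re, sub_re, one_re, add_im, sub_im, one_im]
  linarith

lemma norm_sub_one_div_add_one_lt_one {w : ℂ} (hw : 0 < w.re) : ‖(w - 1) / (w + 1)‖ < 1 := by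
  have hw1 : w + 1 ≠ 0 := fun h => by
    have := congrArg re h
    simp only [add_re, one_re, zero_re] at this
    linarith
  rw [norm_div, div_lt_one (norm_pos_iff.2 hw1), ← sq_lt_sq₀ (norm_nonneg _) (norm_nonneg _),
    Complex.sq_norm, Complex.sq_norm, normSq_apply, normSq_apply]
  simp only [sub_re, add_re, one_re, sub_im, add_im, one_im]
  nlinarith

lemma log_div_of_re_pos {a b : ℂ} (ha : 0 < a.re) (hb : 0 < b.re) :
    log (a / b) = log a - log b := by
  have ha' := abs_lt.1 (abs_arg_lt_pi_div_two_iff.2 (Or.inl ha))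
  have hb' := abs_lt.1 (abs_arg_lt_pi_div_two_iff.2 (Or.inl hb))
  have ha0 : a ≠ 0 := fun h => by simp [h] at ha
  have hb0 : b ≠ 0 := fun h => by simp [h] at hb
  conv_lhs => rw [← exp_log ha0, ← exp_log hb0, ← exp_sub]
  rw [log_exp] <;> simp only [sub_im, log_im] <;> linarith

end Complex

lemma mem_unitDisk_iff {z : ℂ} : z ∈ unitDisk ↔ ‖z‖ < 1 := mem_ball_zero_iff

lemma ofReal_mul_mem_unitDisk {z : ℂ} (hz : z ∈ unitDisk) {t : ℝ} (ht : t ∈ Icc (0 : ℝ) 1) :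
    (t : ℂ) * z ∈ unitDisk := by
  have := (convex_ball (0 : ℂ) 1).smul_mem_of_zero_mem (mem_ball_self one_pos) hz ht
  rwa [real_smul] at this

lemma mul_mem_unitDisk {a z : ℂ} (ha : ‖a‖ ≤ 1) (hz : z ∈ unitDisk) : a * z ∈ unitDisk := by
  rw [mem_unitDisk_iff, norm_mul] at *
  nlinarith [norm_nonneg z]

lemma eqOn_mul_of_mapsTo_ball_of_norm_deriv_eq_one {ω : ℂ → ℂ} {a : ℂ}
    (hd : DifferentiableOn ℂ ω (ball 0 1)) (hmaps : MapsTo ω (ball 0 1) (ball 0 1))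
    (h0 : ω 0 = 0) (hderiv : HasDerivAt ω a 0) (ha : ‖a‖ = 1) :
    EqOn ω (a * ·) (ball 0 1) := by
  have hslope : ‖dslope ω 0 0‖ = 1 / 1 := by rw [dslope_same, hderiv.deriv, ha, div_one]
  intro z hz
  rw [affine_of_mapsTo_ball_of_norm_dslope_eq_div hd
    (by rw [h0]; exact hmaps.mono_right ball_subset_closedBall) (mem_ball_self one_pos) hslope hz,
    dslope_same, hderiv.deriv, h0]
  simp [mul_comm]

lemma eqOn_cayley_of_re_pos_of_norm_deriv_eq_two {p : ℂ → ℂ} {a : ℂ}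
    (hd : DifferentiableOn ℂ p (ball 0 1)) (hre : ∀ z ∈ ball (0 : ℂ) 1, 0 < (p z).re)
    (h0 : p 0 = 1) (hderiv : HasDerivAt p (2 * a) 0) (ha : ‖a‖ = 1) :
    EqOn p (fun z => (1 + a * z) / (1 - a * z)) (ball 0 1) := by
  have hp1 : ∀ z ∈ ball (0 : ℂ) 1, p z + 1 ≠ 0 := fun z hz h => by
    have := congrArg re h
    simp only [add_re, one_re, zero_re] at this
    linarith [hre z hz]
  set ω := fun z => (p z - 1) / (p z + 1)
  have hωd : DifferentiableOn ℂ ω (ball 0 1) := fun z hz =>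
    ((hd z hz).sub_const 1).div ((hd z hz).add_const 1) (hp1 z hz)
  have hωmaps : MapsTo ω (ball 0 1) (ball 0 1) := fun z hz =>
    mem_ball_zero_iff.2 (norm_sub_one_div_add_one_lt_one (hre z hz))
  have hω0 : ω 0 = 0 := by simp [ω, h0]
  have hωderiv : HasDerivAt ω a 0 := by
    refine ((hderiv.sub_const 1).div (hderiv.add_const 1) (by rw [h0]; norm_num)).congr_deriv ?_
    rw [h0]
    ring
  intro z hz
  have hωz := eqOn_mul_of_mapsTo_ball_of_norm_deriv_eq_one hωd hωmaps hω0 hωderiv ha hz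
  have haz : 1 - a * z ≠ 0 := by
    refine one_sub_ne_zero_of_norm_lt_one ?_
    rw [norm_mul, ha, one_mul]
    exact mem_ball_zero_iff.1 hz
  simp only [ω, div_eq_iff (hp1 z hz)] at hωz
  rw [eq_div_iff haz]
  linear_combination hωz

lemma logDeriv_cexp_comp {h : ℂ → ℂ} {z : ℂ} (hh : DifferentiableAt ℂ h z) :
    logDeriv (fun w => exp (h w)) z = deriv h z := by
  rw [show (fun w => exp (h w)) = exp ∘ h from rfl, logDeriv_comp differentiableAt_exp hh,
    Complex.logDeriv_exp, Pi.one_apply, one_mul]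

lemma logf_zero_right (f : ℂ → ℂ) : logf f 0 = 0 := by
  simp [logf]

lemma logf_congr {f g : ℂ → ℂ} {z : ℂ} (h : EqOn (logDeriv f) (logDeriv g) unitDisk)
    (hz : z ∈ unitDisk) : logf f z = logf g z :=
  intervalIntegral.integral_congr fun t ht => by
    rw [uIcc_of_le zero_le_one] at ht
    simp only [← logDeriv_apply, h (ofReal_mul_mem_unitDisk hz ht)]

lemma logf_cexp_comp {h : ℂ → ℂ} (hd : DifferentiableOn ℂ h unitDisk) {z : ℂ}
    (hz : z ∈ unitDisk) : logf (fun w => exp (h w)) z = h z - h 0 := by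
  have hseg : ∀ t ∈ uIcc (0 : ℝ) 1, (t : ℂ) * z ∈ unitDisk := fun t ht =>
    ofReal_mul_mem_unitDisk hz (by rwa [uIcc_of_le zero_le_one] at ht)
  have hdiff : ∀ w ∈ unitDisk, DifferentiableAt ℂ h w := fun w hw =>
    hd.differentiableAt (isOpen_ball.mem_nhds hw)
  have hcont : ContinuousOn (fun t : ℝ => deriv h (t * z) * z) (uIcc 0 1) :=
    ((hd.analyticOnNhd isOpen_ball).deriv.continuousOn.comp (by fun_prop) hseg).mul
      continuousOn_const
  calc logf (fun w => exp (h w)) z = ∫ t in (0 : ℝ)..1, deriv h (t * z) * z :=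
        intervalIntegral.integral_congr fun t ht => by
          simp only [← logDeriv_apply, logDeriv_cexp_comp (hdiff _ (hseg t ht))]
    _ = h ((1 : ℝ) * z) - h ((0 : ℝ) * z) := by
        refine intervalIntegral.integral_eq_sub_of_hasDerivAt (f := fun t : ℝ => h (t * z))
          (fun t ht => ?_) hcont.intervalIntegrable
        refine HasDerivAt.comp_ofReal (e := fun w => h (w * z)) ?_
        have := (hdiff _ (hseg t ht)).hasDerivAt.comp (t : ℂ) ((hasDerivAt_id _).mul_const z)
        rwa [one_mul] at this
    _ = h z - h 0 := by simp

lemma hasDerivAt_Pfun_zero (μ : ℂ) {f : ℂ → ℂ} (hf : AnalyticAt ℂ f 0) (hf0 : f 0 = 1) :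
    HasDerivAt (Pfun μ f) (2 * (Real.pi : ℂ) / μ * deriv f 0 + 2) 0 := by
  have hquot := ((hasDerivAt_id (0 : ℂ)).mul hf.deriv.differentiableAt.hasDerivAt).div
    hf.differentiableAt.hasDerivAt (by rw [hf0]; exact one_ne_zero)
  have hcay := ((hasDerivAt_id (0 : ℂ)).const_add 1).div ((hasDerivAt_id (0 : ℂ)).const_sub 1)
    (by norm_num)
  refine ((hquot.const_mul (2 * (Real.pi : ℂ) / μ)).add hcay).congr_deriv ?_
  simp only [hf0, Pi.mul_apply, id_eq]
  ring

lemma differentiableOn_Pfun (μ : ℂ) {f : ℂ → ℂ} (hf : AnalyticOnNhd ℂ f unitDisk)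
    (hne : ∀ z ∈ unitDisk, f z ≠ 0) : DifferentiableOn ℂ (Pfun μ f) unitDisk := fun z hz =>
  DifferentiableAt.differentiableWithinAt <|
    (((differentiableAt_id.mul (hf.deriv z hz).differentiableAt).div (hf z hz).differentiableAt
      (hne z hz)).const_mul _).add
    (((differentiableAt_const 1).add differentiableAt_id).div
      ((differentiableAt_const 1).sub differentiableAt_id)
      (one_sub_ne_zero_of_norm_lt_one (mem_unitDisk_iff.1 hz)))

lemma eqOn_Pfun_cayley_of_norm_eq_one {μ lam : ℂ} (hμ : μ ≠ 0) (hlam : ‖lam‖ = 1) {f : ℂ → ℂ}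
    (hf : memFlam μ lam f) :
    EqOn (Pfun μ f) (fun z => (1 + lam * z) / (1 - lam * z)) unitDisk := by
  obtain ⟨⟨han, hne, hf0, hre⟩, hderiv0⟩ := hf
  refine eqOn_cayley_of_re_pos_of_norm_deriv_eq_two (differentiableOn_Pfun μ han hne) hre
    (by simp [Pfun]) ?_ hlam
  refine (hasDerivAt_Pfun_zero μ (han 0 (mem_ball_self one_pos)) hf0).congr_deriv ?_
  rw [hderiv0]
  field_simp
  ring

noncomputable def extremalLog (μ lam z : ℂ) : ℂ :=
  μ / (Real.pi : ℂ) * (log (1 - z) - log (1 - lam * z))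

noncomputable def extremalLogDeriv (μ lam z : ℂ) : ℂ :=
  μ / (Real.pi : ℂ) * ((lam - 1) / ((1 - z) * (1 - lam * z)))

section Extremal

variable {μ lam : ℂ}

lemma hasDerivAt_extremalLog (hlam : ‖lam‖ ≤ 1) {z : ℂ} (hz : z ∈ unitDisk) :
    HasDerivAt (extremalLog μ lam) (extremalLogDeriv μ lam z) z := by
  have hz' := mem_unitDisk_iff.1 hz
  have hlz := mem_unitDisk_iff.1 (mul_mem_unitDisk hlam hz)
  have h1 := ((hasDerivAt_id z).const_sub 1).clog (Or.inl (re_one_sub_pos hz'))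
  have h2 := (((hasDerivAt_id z).const_mul lam).const_sub 1).clog (Or.inl (re_one_sub_pos hlz))
  refine ((h1.sub h2).const_mul _).congr_deriv ?_
  have h1z := one_sub_ne_zero_of_norm_lt_one hz'
  have hlz' : 1 - z * lam ≠ 0 := mul_comm lam z ▸ one_sub_ne_zero_of_norm_lt_one hlz
  simp only [extremalLogDeriv, id]
  field_simp
  ring

lemma differentiableOn_extremalLog (hlam : ‖lam‖ ≤ 1) :
    DifferentiableOn ℂ (extremalLog μ lam) unitDisk := fun _ hz =>
  (hasDerivAt_extremalLog hlam hz).differentiableAt.differentiableWithinAt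

lemma logDeriv_cexp_extremalLog (hlam : ‖lam‖ ≤ 1) {z : ℂ} (hz : z ∈ unitDisk) :
    logDeriv (fun w => exp (extremalLog μ lam w)) z = extremalLogDeriv μ lam z := by
  rw [logDeriv_cexp_comp (hasDerivAt_extremalLog hlam hz).differentiableAt,
    (hasDerivAt_extremalLog hlam hz).deriv]

lemma extremalLog_eq_mul_log_div (hlam : ‖lam‖ ≤ 1) {z : ℂ} (hz : z ∈ unitDisk) :
    extremalLog μ lam z = μ / (Real.pi : ℂ) * log ((1 - z) / (1 - lam * z)) := by
  rw [extremalLog, log_div_of_re_pos (re_one_sub_pos (mem_unitDisk_iff.1 hz))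
    (re_one_sub_pos (mem_unitDisk_iff.1 (mul_mem_unitDisk hlam hz)))]

lemma Pfun_eq_cayley_iff (f : ℂ → ℂ) (hμ : μ ≠ 0) (hlam : ‖lam‖ ≤ 1) {z : ℂ}
    (hz : z ∈ unitDisk) :
    Pfun μ f z = (1 + lam * z) / (1 - lam * z) ↔
      z * logDeriv f z = z * extremalLogDeriv μ lam z := by
  have h1z := one_sub_ne_zero_of_norm_lt_one (mem_unitDisk_iff.1 hz)
  have hlz := one_sub_ne_zero_of_norm_lt_one (mem_unitDisk_iff.1 (mul_mem_unitDisk hlam hz))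
  have hpi : (Real.pi : ℂ) ≠ 0 := ofReal_ne_zero.2 Real.pi_ne_zero
  have hcay : (1 + lam * z) / (1 - lam * z)
      = 2 * (Real.pi : ℂ) / μ * (z * extremalLogDeriv μ lam z) + (1 + z) / (1 - z) := by
    rw [extremalLogDeriv]
    field_simp
    ring
  rw [Pfun, hcay, mul_div_assoc z, ← logDeriv_apply, add_left_inj,
    mul_right_inj' (div_ne_zero (mul_ne_zero two_ne_zero hpi) hμ)]

lemma memFlam_cexp_extremalLog (hμ : μ ≠ 0) (hlam : ‖lam‖ ≤ 1) :
    memFlam μ lam (fun z => exp (extremalLog μ lam z)) := by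
  have h0 : (0 : ℂ) ∈ unitDisk := mem_ball_self one_pos
  refine ⟨⟨?_, fun z _ => exp_ne_zero _, by simp [extremalLog], fun z hz => ?_⟩, ?_⟩
  · exact (differentiableOn_extremalLog hlam).cexp.analyticOnNhd isOpen_ball
  · rw [(Pfun_eq_cayley_iff _ hμ hlam hz).2 (by rw [logDeriv_cexp_extremalLog hlam hz])]
    exact re_one_add_div_one_sub_pos (mem_unitDisk_iff.1 (mul_mem_unitDisk hlam hz))
  · rw [(hasDerivAt_extremalLog hlam h0).cexp.deriv]
    simp [extremalLog, extremalLogDeriv]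

lemma eqOn_logDeriv_extremalLogDeriv (hμ : μ ≠ 0) (hlam : ‖lam‖ = 1) {f : ℂ → ℂ}
    (hf : memFlam μ lam f) : EqOn (logDeriv f) (extremalLogDeriv μ lam) unitDisk := by
  intro z hz
  rcases eq_or_ne z 0 with rfl | hz0
  · rw [logDeriv_apply, hf.2, hf.1.2.2.1, div_one]
    simp [extremalLogDeriv]
  · exact mul_left_cancel₀ hz0 <|
      (Pfun_eq_cayley_iff f hμ hlam.le hz).1 (eqOn_Pfun_cayley_of_norm_eq_one hμ hlam hf hz)

end Extremal

theorem stmt3 (μ lam z₀ : ℂ) (hμ : 0 < μ.re) (hlam : ‖lam‖ ≤ 1)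
    (hz₀ : z₀ ∈ unitDisk) (h : ‖lam‖ = 1 ∨ z₀ = 0) :
    Vset μ lam z₀ = {μ / (Real.pi : ℂ) * Complex.log ((1 - z₀) / (1 - lam * z₀))} := by
  have hμ0 : μ ≠ 0 := fun h0 => by simp [h0] at hμ
  set f₀ := fun z => exp (extremalLog μ lam z)
  have hlog₀ : logf f₀ z₀ = μ / (Real.pi : ℂ) * log ((1 - z₀) / (1 - lam * z₀)) := by
    rw [logf_cexp_comp (differentiableOn_extremalLog hlam) hz₀, extremalLog_eq_mul_log_div hlam hz₀]
    simp [extremalLog]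
  ext w
  refine ⟨?_, fun hw => ⟨f₀, memFlam_cexp_extremalLog hμ0 hlam, hw.trans hlog₀.symm⟩⟩
  rintro ⟨f, hf, rfl⟩
  rw [mem_singleton_iff, ← hlog₀]
  rcases h with hlam1 | rfl
  · exact logf_congr ((eqOn_logDeriv_extremalLogDeriv hμ0 hlam1 hf).trans
      fun z hz => (logDeriv_cexp_extremalLog hlam hz).symm) hz₀
  · rw [logf_zero_right, logf_zero_right]
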